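/- arXiv:2210.01302 — 4 statements merged into one kernel-verified Lean document; each statement's English description precedes it below -/
import Mathlib

section
/- Let A, B be independent uniform Bernoulli(1/2) random variables, Y = A XOR B, and let Z be a random variable such that Z is conditionally independent of (A,B) given Y (i.e., Z is generated from Y and exogenous noise independent of (A,B)). Then B is independent of the pair (Y, Z), and consequently B is conditionally independent of Y given Z. -/
open MeasureTheory

private lemma nullMeasurable_of_compl_aux {Ω : Type*} [MeasurableSpace Ω] (μ : Measure Ω)
    [IsFiniteMeasure μ] {s : Set Ω} (h : μ s + μ sᶜ = μ Set.univ) :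
    NullMeasurableSet s μ := by
  have hu : toMeasurable μ s ∪ toMeasurable μ sᶜ = Set.univ := by
    apply Set.eq_univ_of_forall
    intro x
    by_cases hx : x ∈ s
    · exact Or.inl (subset_toMeasurable μ s hx)
    · exact Or.inr (subset_toMeasurable μ sᶜ hx)
  have hmes : μ (toMeasurable μ s ∩ toMeasurable μ sᶜ) = 0 := by
    have h1 : μ (toMeasurable μ s ∪ toMeasurable μ sᶜ)
        + μ (toMeasurable μ s ∩ toMeasurable μ sᶜ)
        = μ (toMeasurable μ s) + μ (toMeasurable μ sᶜ) :=
      measure_union_add_inter _ (measurableSet_toMeasurable μ sᶜ)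
    rw [hu, measure_toMeasurable, measure_toMeasurable, h] at h1
    have h2 : μ Set.univ + μ (toMeasurable μ s ∩ toMeasurable μ sᶜ) = μ Set.univ + 0 := by
      rw [add_zero]; exact h1
    exact (ENNReal.add_right_inj (measure_ne_top μ _)).mp h2
  have hnull : μ (toMeasurable μ s \ s) = 0 :=
    measure_mono_null (fun x hx => Set.mem_inter hx.1 (subset_toMeasurable μ sᶜ hx.2)) hmes
  have hd := (measurableSet_toMeasurable μ s).nullMeasurableSet.diff
    (NullMeasurableSet.of_null hnull)
  rwa [Set.diff_diff_cancel_left (subset_toMeasurable μ s)] at hd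

/-- If `A, B` are independent uniform bits, `Y = A XOR B`, and `Z` is
conditionally independent of `(A, B)` given `Y`, then `B` is independent of the pair
`(Y, Z)`, and consequently `B` is conditionally independent of `Y` given `Z`. -/
theorem xor_mask_indep
    {Ω γ : Type*} [MeasurableSpace Ω] (μ : Measure Ω) [IsProbabilityMeasure μ]
    (A B : Ω → Bool) (Z : Ω → γ) (Y : Ω → Bool)
    (hY : ∀ ω, Y ω = xor (A ω) (B ω))
    (hunifA : ∀ a : Bool, μ {ω | A ω = a} = 1 / 2)
    (hunifB : ∀ b : Bool, μ {ω | B ω = b} = 1 / 2)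
    (hindepAB : ∀ a b : Bool,
      μ {ω | A ω = a ∧ B ω = b} = μ {ω | A ω = a} * μ {ω | B ω = b})
    -- Z ⟂ (A, B) | Y, stated in cross-multiplied form:
    (hZcond : ∀ (z : γ) (a b y : Bool),
      μ {ω | Z ω = z ∧ A ω = a ∧ B ω = b ∧ Y ω = y} * μ {ω | Y ω = y}
        = μ {ω | Z ω = z ∧ Y ω = y} * μ {ω | A ω = a ∧ B ω = b ∧ Y ω = y}) :
    -- B ⟂ (Y, Z):
    (∀ (b y : Bool) (z : γ),
      μ {ω | B ω = b ∧ Y ω = y ∧ Z ω = z}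
        = μ {ω | B ω = b} * μ {ω | Y ω = y ∧ Z ω = z})
    -- and consequently B ⟂ Y | Z (in cross-multiplied form):
    ∧ (∀ (b y : Bool) (z : γ),
      μ {ω | B ω = b ∧ Y ω = y ∧ Z ω = z} * μ {ω | Z ω = z}
        = μ {ω | B ω = b ∧ Z ω = z} * μ {ω | Y ω = y ∧ Z ω = z}) := by
  -- numeric facts
  have hhalf : (1/2 : ENNReal) * (1/2) = 1/4 := by
    simp only [one_div]
    rw [show (4:ENNReal) = 2*2 by norm_num, ENNReal.mul_inv (by norm_num) (by norm_num)]
  have q1 : (1/2 : ENNReal) * 2 = 1 := by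
    rw [one_div]; exact ENNReal.inv_mul_cancel two_ne_zero ENNReal.ofNat_ne_top
  have q2 : (1/4 : ENNReal) * 2 = 1/2 := by
    simp only [one_div]
    rw [show (4:ENNReal) = 2*2 by norm_num, ENNReal.mul_inv (by norm_num) (by norm_num),
      mul_assoc, ENNReal.inv_mul_cancel two_ne_zero ENNReal.ofNat_ne_top, mul_one]
  have qq : (1/4 : ENNReal) + 1/4 = 1/2 := by
    rw [← hhalf, ← mul_add, ENNReal.add_halves, mul_one]
  have hhalf_ne_top : (1/2 : ENNReal) ≠ ⊤ := by
    simp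
  -- measure of A,B rectangles
  have hAB : ∀ a b : Bool, μ {ω | A ω = a ∧ B ω = b} = 1/4 := by
    intro a b; rw [hindepAB, hunifA, hunifB, hhalf]
  -- set identities
  have hset1 : ∀ (b y : Bool) (z : γ),
      {ω | Z ω = z ∧ A ω = xor y b ∧ B ω = b ∧ Y ω = y}
        = {ω | B ω = b ∧ Y ω = y ∧ Z ω = z} := by
    intro b y z; ext ω
    simp only [Set.mem_setOf_eq, hY ω]
    cases hA : A ω <;> cases hB : B ω <;> cases b <;> cases y <;> simp
  have hset2 : ∀ (b y : Bool),
      {ω | A ω = xor y b ∧ B ω = b ∧ Y ω = y} = {ω | A ω = xor y b ∧ B ω = b} := by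
    intro b y; ext ω
    simp only [Set.mem_setOf_eq, hY ω]
    cases hA : A ω <;> cases hB : B ω <;> cases b <;> cases y <;> simp
  have hset3 : ∀ (y : Bool) (z : γ),
      {ω | Y ω = y ∧ Z ω = z} = {ω | Z ω = z ∧ Y ω = y} := by
    intro y z; ext ω; simp only [Set.mem_setOf_eq]; exact and_comm
  -- μ {Y = y} = 1/2
  have hYle : ∀ y : Bool, μ {ω | Y ω = y} ≤ 1/2 := by
    intro y
    have hsub : {ω | Y ω = y} ⊆ {ω | A ω = true ∧ B ω = xor true y}
        ∪ {ω | A ω = false ∧ B ω = xor false y} := by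
      intro ω hω
      have hω' : xor (A ω) (B ω) = y := by rw [← hY ω]; exact hω
      have hB' : B ω = xor (A ω) y := by
        revert hω'; cases A ω <;> cases B ω <;> cases y <;> simp
      cases hA : A ω
      · exact Or.inr ⟨hA, by rw [hB', hA]⟩
      · exact Or.inl ⟨hA, by rw [hB', hA]⟩
    calc μ {ω | Y ω = y} ≤ μ ({ω | A ω = true ∧ B ω = xor true y}
          ∪ {ω | A ω = false ∧ B ω = xor false y}) := measure_mono hsub
      _ ≤ μ {ω | A ω = true ∧ B ω = xor true y}
          + μ {ω | A ω = false ∧ B ω = xor false y} := measure_union_le _ _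
      _ = 1/4 + 1/4 := by rw [hAB, hAB]
      _ = 1/2 := qq
  have hYhalf : ∀ y : Bool, μ {ω | Y ω = y} = 1/2 := by
    have h1 : (1:ENNReal) ≤ μ {ω | Y ω = true} + μ {ω | Y ω = false} := by
      have huniv : (Set.univ : Set Ω) ⊆ {ω | Y ω = true} ∪ {ω | Y ω = false} := by
        intro ω _
        cases h : Y ω
        · exact Or.inr h
        · exact Or.inl h
      calc (1:ENNReal) = μ Set.univ := (measure_univ (μ := μ)).symm
        _ ≤ μ ({ω | Y ω = true} ∪ {ω | Y ω = false}) := measure_mono huniv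
        _ ≤ _ := measure_union_le _ _
    intro y
    refine le_antisymm (hYle y) ?_
    have h2 : (1:ENNReal) ≤ μ {ω | Y ω = y} + 1/2 := by
      cases y
      · calc (1:ENNReal) ≤ μ {ω | Y ω = true} + μ {ω | Y ω = false} := h1
          _ = μ {ω | Y ω = false} + μ {ω | Y ω = true} := add_comm _ _
          _ ≤ μ {ω | Y ω = false} + 1/2 := add_le_add le_rfl (hYle true)
      · exact h1.trans (add_le_add le_rfl (hYle false))
    have h3 : (1/2 : ENNReal) + 1/2 ≤ μ {ω | Y ω = y} + 1/2 := by
      rw [ENNReal.add_halves]; exact h2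
    exact (ENNReal.add_le_add_iff_right hhalf_ne_top).mp h3
  -- the key computation
  have hX : ∀ (b y : Bool) (z : γ),
      μ {ω | B ω = b ∧ Y ω = y ∧ Z ω = z} = 1/2 * μ {ω | Z ω = z ∧ Y ω = y} := by
    intro b y z
    have h := hZcond z (xor y b) b y
    rw [hset1 b y z, hset2 b y, hYhalf y, hAB] at h
    have h2 := congrArg (· * 2) h
    rw [mul_assoc, mul_assoc, q1, q2, mul_one] at h2
    rw [h2, mul_comm]
  -- {Y = true} is null measurable
  have hcomplY : {ω | Y ω = true}ᶜ = {ω | Y ω = false} := by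
    ext ω; simp
  have hNM : NullMeasurableSet {ω | Y ω = true} μ := by
    refine nullMeasurable_of_compl_aux μ ?_
    rw [hcomplY, hYhalf, hYhalf, measure_univ, ENNReal.add_halves]
  have hZsplit : ∀ z : γ,
      μ {ω | Z ω = z ∧ Y ω = true} + μ {ω | Z ω = z ∧ Y ω = false} = μ {ω | Z ω = z} := by
    intro z
    have h := measure_inter_add_diff₀ (μ := μ) {ω | Z ω = z} hNM
    have e1 : {ω | Z ω = z} ∩ {ω | Y ω = true} = {ω | Z ω = z ∧ Y ω = true} := by
      ext ω; simp [Set.mem_setOf_eq]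
    have e2 : {ω | Z ω = z} \ {ω | Y ω = true} = {ω | Z ω = z ∧ Y ω = false} := by
      ext ω; simp [Set.mem_setOf_eq]
    rwa [e1, e2] at h
  -- μ {B = b ∧ Z = z} = μ {Z = z} / 2
  have hup : ∀ (b : Bool) (z : γ), μ {ω | B ω = b ∧ Z ω = z} ≤ μ {ω | Z ω = z} / 2 := by
    intro b z
    have hsub : {ω | B ω = b ∧ Z ω = z} ⊆ {ω | B ω = b ∧ Y ω = true ∧ Z ω = z}
        ∪ {ω | B ω = b ∧ Y ω = false ∧ Z ω = z} := by
      rintro ω ⟨h1, h2⟩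
      cases h : Y ω
      · exact Or.inr ⟨h1, h, h2⟩
      · exact Or.inl ⟨h1, h, h2⟩
    calc μ {ω | B ω = b ∧ Z ω = z} ≤ μ ({ω | B ω = b ∧ Y ω = true ∧ Z ω = z}
          ∪ {ω | B ω = b ∧ Y ω = false ∧ Z ω = z}) := measure_mono hsub
      _ ≤ μ {ω | B ω = b ∧ Y ω = true ∧ Z ω = z}
          + μ {ω | B ω = b ∧ Y ω = false ∧ Z ω = z} := measure_union_le _ _
      _ = 1/2 * μ {ω | Z ω = z ∧ Y ω = true} + 1/2 * μ {ω | Z ω = z ∧ Y ω = false} := by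
          rw [hX, hX]
      _ = 1/2 * (μ {ω | Z ω = z ∧ Y ω = true} + μ {ω | Z ω = z ∧ Y ω = false}) :=
          (mul_add _ _ _).symm
      _ = 1/2 * μ {ω | Z ω = z} := by rw [hZsplit]
      _ = μ {ω | Z ω = z} / 2 := by rw [one_div, div_eq_mul_inv, mul_comm]
  have hBZ : ∀ (b : Bool) (z : γ), μ {ω | B ω = b ∧ Z ω = z} = μ {ω | Z ω = z} / 2 := by
    intro b z
    refine le_antisymm (hup b z) ?_
    have hlow : μ {ω | Z ω = z} ≤ μ {ω | B ω = b ∧ Z ω = z} + μ {ω | B ω = !b ∧ Z ω = z} := by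
      refine le_trans (measure_mono ?_) (measure_union_le _ _)
      intro ω (hω : Z ω = z)
      by_cases hb : B ω = b
      · exact Or.inl ⟨hb, hω⟩
      · exact Or.inr ⟨by revert hb; cases B ω <;> cases b <;> simp, hω⟩
    have h4 : μ {ω | Z ω = z} ≤ μ {ω | B ω = b ∧ Z ω = z} + μ {ω | Z ω = z} / 2 :=
      hlow.trans (add_le_add le_rfl (hup (!b) z))
    have hfin2 : μ {ω | Z ω = z} / 2 ≠ ⊤ :=
      ne_top_of_le_ne_top (measure_ne_top μ _) ENNReal.half_le_self
    have h5 : μ {ω | Z ω = z} / 2 + μ {ω | Z ω = z} / 2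
        ≤ μ {ω | B ω = b ∧ Z ω = z} + μ {ω | Z ω = z} / 2 := by
      rw [ENNReal.add_halves]; exact h4
    exact (ENNReal.add_le_add_iff_right hfin2).mp h5
  constructor
  · intro b y z
    rw [hX b y z, hunifB b, hset3 y z]
  · intro b y z
    rw [hX b y z, hBZ b z, hset3 y z]
    simp only [div_eq_mul_inv, one_div]
    ring
end

section
/- Let Y be uniform on {1,2,3}, Z real-valued with a continuous distribution conditional on Y, and X the vector obtained by negating the Y-th coordinate of (Z,Z,Z). Let π be a uniformly random permutation of {1,2,3}, independent of (Y,Z). Define T(X) = (X_{π(1)}, X_{π(2)}, X_{π(3)}). Then T(X) is conditionally independent of Y given Z. -/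
open MeasureTheory ProbabilityTheory

set_option maxHeartbeats 1000000 in
/-- With `Y` uniform on `Fin 3`, `Z` real-valued with a continuous
(atomless) distribution conditional on `Y`, `X` the vector obtained by negating the
`Y`-th coordinate of `(Z, Z, Z)`, and `π` a uniformly random permutation of the
coordinates independent of `(Y, Z)`, the randomly permuted vector
`T(X) = (X_{π(1)}, X_{π(2)}, X_{π(3)})` is conditionally independent of `Y` given `Z`. -/
theorem patch_randomization_cond_indep
    {Ω : Type*} [MeasurableSpace Ω] [StandardBorelSpace Ω]
    (μ : Measure Ω) [IsProbabilityMeasure μ]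
    (Y : Ω → Fin 3) (Z : Ω → ℝ) (π : Ω → Equiv.Perm (Fin 3))
    (hYmeas : Measurable Y) (hZmeas : Measurable Z)
    (X : Ω → Fin 3 → ℝ)
    (hX : ∀ ω i, X ω i = if i = Y ω then -(Z ω) else Z ω)
    (hYunif : ∀ y : Fin 3, μ {ω | Y ω = y} = (3 : ENNReal)⁻¹)
    -- continuous distribution of Z conditional on Y (no atoms):
    (hZcont : ∀ (y : Fin 3) (z : ℝ), μ {ω | Y ω = y ∧ Z ω = z} = 0)
    -- π is uniform over the 6 permutations:
    (hπunif : ∀ σ : Equiv.Perm (Fin 3), μ {ω | π ω = σ} = (6 : ENNReal)⁻¹)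
    -- π is independent of (Y, Z):
    (hπindep : ∀ (σ : Equiv.Perm (Fin 3)) (s : Set (Fin 3 × ℝ)),
      μ {ω | π ω = σ ∧ (Y ω, Z ω) ∈ s}
        = μ {ω | π ω = σ} * μ {ω | (Y ω, Z ω) ∈ s})
    (TX : Ω → Fin 3 → ℝ) (hTX : ∀ ω i, TX ω i = X ω (π ω i))
    (hTXmeas : Measurable TX) :
    CondIndepFun (MeasurableSpace.comap Z inferInstance) hZmeas.comap_le TX Y μ := by
  classical
  have hYZ : Measurable fun ω => (Y ω, Z ω) := hYmeas.prodMk hZmeas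
  -- counting lemma over permutations
  have sum_perm3 : ∀ (f : Fin 3 → ENNReal) (y : Fin 3),
      ∑ σ : Equiv.Perm (Fin 3), f (σ⁻¹ y) = 2 * ∑ j : Fin 3, f j := by
    intro f y
    have hcard : ∀ y j : Fin 3,
        (Finset.univ.filter fun σ : Equiv.Perm (Fin 3) => σ⁻¹ y = j).card = 2 := by decide
    rw [← Finset.sum_fiberwise_of_maps_to' (t := Finset.univ)
      (g := fun σ : Equiv.Perm (Fin 3) => σ⁻¹ y) (fun σ _ => Finset.mem_univ _) f,
      Finset.mul_sum]
    refine Finset.sum_congr rfl fun j _ => ?_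
    rw [Finset.sum_const, hcard y j]
    simp [two_mul, two_nsmul]
  -- partition over values of Y
  have decompY : ∀ A : Set Ω, MeasurableSet A →
      μ A = ∑ y : Fin 3, μ (A ∩ Y ⁻¹' {y}) := by
    intro A hA
    have hU : A = ⋃ y : Fin 3, A ∩ Y ⁻¹' {y} := by
      ext ω
      simp [Set.mem_iUnion]
    have hdisj : Pairwise (Function.onFun Disjoint fun y : Fin 3 => A ∩ Y ⁻¹' {y}) := by
      intro y y' hyy'
      simp only [Function.onFun, Set.disjoint_left]
      rintro ω ⟨-, h1⟩ ⟨-, h2⟩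
      exact hyy' ((Set.mem_singleton_iff.1 h1).symm.trans (Set.mem_singleton_iff.1 h2))
    calc μ A = μ (⋃ y : Fin 3, A ∩ Y ⁻¹' {y}) := by rw [← hU]
      _ = ∑ y : Fin 3, μ (A ∩ Y ⁻¹' {y}) := by
          rw [measure_iUnion hdisj fun y => hA.inter (hYmeas (measurableSet_singleton y)),
            tsum_fintype]
  -- decomposition over the random permutation
  have keyA : ∀ (D : Equiv.Perm (Fin 3) → Set (Fin 3 × ℝ)), (∀ σ, MeasurableSet (D σ)) →
      ∀ F : Set Ω, MeasurableSet F → (∀ ω, ω ∈ F ↔ (Y ω, Z ω) ∈ D (π ω)) →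
      μ F = (6 : ENNReal)⁻¹ * ∑ σ : Equiv.Perm (Fin 3), μ {ω | (Y ω, Z ω) ∈ D σ} := by
    have hle : ∀ (D : Equiv.Perm (Fin 3) → Set (Fin 3 × ℝ)) (F : Set Ω),
        (∀ ω, ω ∈ F ↔ (Y ω, Z ω) ∈ D (π ω)) →
        μ F ≤ (6 : ENNReal)⁻¹ * ∑ σ : Equiv.Perm (Fin 3), μ {ω | (Y ω, Z ω) ∈ D σ} := by
      intro D F hF
      have hsub : F ⊆ ⋃ σ : Equiv.Perm (Fin 3), {ω | π ω = σ ∧ (Y ω, Z ω) ∈ D σ} := by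
        intro ω hω
        exact Set.mem_iUnion.2 ⟨π ω, rfl, (hF ω).1 hω⟩
      calc μ F ≤ μ (⋃ σ : Equiv.Perm (Fin 3), {ω | π ω = σ ∧ (Y ω, Z ω) ∈ D σ}) :=
            measure_mono hsub
        _ ≤ ∑' σ : Equiv.Perm (Fin 3), μ {ω | π ω = σ ∧ (Y ω, Z ω) ∈ D σ} := measure_iUnion_le _
        _ = ∑ σ : Equiv.Perm (Fin 3), μ {ω | π ω = σ ∧ (Y ω, Z ω) ∈ D σ} := tsum_fintype _
        _ = (6 : ENNReal)⁻¹ * ∑ σ : Equiv.Perm (Fin 3), μ {ω | (Y ω, Z ω) ∈ D σ} := by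
            rw [Finset.mul_sum]
            exact Finset.sum_congr rfl fun σ _ => by rw [hπindep σ (D σ), hπunif σ]
    intro D hD F hFm hF
    have h1 := hle D F hF
    have h2 := hle (fun σ => (D σ)ᶜ) Fᶜ (fun ω => by simp [hF ω])
    have hcompl : ∀ σ, μ {ω | (Y ω, Z ω) ∈ (D σ)ᶜ} = 1 - μ {ω | (Y ω, Z ω) ∈ D σ} := by
      intro σ
      have hms : MeasurableSet {ω | (Y ω, Z ω) ∈ D σ} := hYZ (hD σ)
      have : {ω | (Y ω, Z ω) ∈ (D σ)ᶜ} = {ω | (Y ω, Z ω) ∈ D σ}ᶜ := rfl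
      rw [this, measure_compl hms (measure_ne_top μ _), measure_univ]
    have hsum1 : (6 : ENNReal)⁻¹ * ∑ σ : Equiv.Perm (Fin 3), μ {ω | (Y ω, Z ω) ∈ D σ}
        + (6 : ENNReal)⁻¹ * ∑ σ : Equiv.Perm (Fin 3), μ {ω | (Y ω, Z ω) ∈ (D σ)ᶜ} = 1 := by
      rw [← mul_add, ← Finset.sum_add_distrib]
      have : ∀ σ : Equiv.Perm (Fin 3),
          μ {ω | (Y ω, Z ω) ∈ D σ} + μ {ω | (Y ω, Z ω) ∈ (D σ)ᶜ} = 1 := by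
        intro σ
        have hms : MeasurableSet {ω | (Y ω, Z ω) ∈ D σ} := hYZ (hD σ)
        have : {ω | (Y ω, Z ω) ∈ (D σ)ᶜ} = {ω | (Y ω, Z ω) ∈ D σ}ᶜ := rfl
        rw [this]
        exact prob_add_prob_compl hms
      rw [Finset.sum_congr rfl fun σ _ => this σ, Finset.sum_const, Finset.card_univ]
      have hc : Fintype.card (Equiv.Perm (Fin 3)) = 6 := by decide
      rw [hc]
      simp only [nsmul_eq_mul, mul_one, Nat.cast_ofNat]
      rw [ENNReal.inv_mul_cancel (by norm_num) (by norm_num)]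
    have hFF : μ F + μ Fᶜ = 1 := prob_add_prob_compl hFm
    -- from a ≤ x, b ≤ y, a + b = 1 = x + y conclude a = x
    refine le_antisymm h1 ?_
    have hb : μ Fᶜ ≠ ⊤ := measure_ne_top μ _
    have hx : (6 : ENNReal)⁻¹ * ∑ σ : Equiv.Perm (Fin 3), μ {ω | (Y ω, Z ω) ∈ D σ}
        = 1 - (6 : ENNReal)⁻¹ * ∑ σ : Equiv.Perm (Fin 3), μ {ω | (Y ω, Z ω) ∈ (D σ)ᶜ} :=
      ENNReal.eq_sub_of_add_eq (ne_top_of_le_ne_top ENNReal.one_ne_top (by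
        calc (6 : ENNReal)⁻¹ * ∑ σ : Equiv.Perm (Fin 3), μ {ω | (Y ω, Z ω) ∈ (D σ)ᶜ}
            ≤ (6 : ENNReal)⁻¹ * ∑ σ : Equiv.Perm (Fin 3), μ {ω | (Y ω, Z ω) ∈ D σ}
              + (6 : ENNReal)⁻¹ * ∑ σ : Equiv.Perm (Fin 3), μ {ω | (Y ω, Z ω) ∈ (D σ)ᶜ} :=
              le_add_self
          _ = 1 := hsum1)) hsum1
    have ha : μ F = 1 - μ Fᶜ := ENNReal.eq_sub_of_add_eq hb hFF
    rw [hx, ha]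
    exact tsub_le_tsub_left h2 1
  -- pointwise rewriting of the permuted vector
  have hfe : ∀ (y : Fin 3) (σ : Equiv.Perm (Fin 3)) (z : ℝ),
      (fun i => if σ i = y then -z else z) = (fun i => if i = σ⁻¹ y then -z else z) := by
    intro y σ z
    funext i
    have : (σ i = y) ↔ (i = σ⁻¹ y) := ⟨fun h => by simp [← h], fun h => by simp [h]⟩
    exact if_congr this rfl rfl
  -- the key measure identity
  have key : ∀ (s : Set (Fin 3 → ℝ)), MeasurableSet s → ∀ (t : Set (Fin 3)) (C₀ : Set ℝ),
      MeasurableSet C₀ →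
      μ (TX ⁻¹' s ∩ (Y ⁻¹' t ∩ Z ⁻¹' C₀))
        = 3⁻¹ * ∑ j : Fin 3,
            μ (Y ⁻¹' t ∩ Z ⁻¹' ({z : ℝ | (fun i => if i = j then -z else z) ∈ s} ∩ C₀)) := by
    intro s hs t C₀ hC₀
    have ht : MeasurableSet t := t.to_countable.measurableSet
    set D : Equiv.Perm (Fin 3) → Set (Fin 3 × ℝ) :=
      fun σ => {p : Fin 3 × ℝ |
        (fun i => if σ i = p.1 then -p.2 else p.2) ∈ s ∧ p.1 ∈ t ∧ p.2 ∈ C₀} with hDdef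
    have hBmeas : ∀ j : Fin 3,
        MeasurableSet {z : ℝ | (fun i => if i = j then -z else z) ∈ s} := by
      intro j
      have hφ : Measurable fun z : ℝ => (fun i : Fin 3 => if i = j then -z else z) := by
        refine measurable_pi_lambda _ fun i => ?_
        by_cases h : i = j
        · simpa [h] using measurable_neg
        · simpa [h] using measurable_id'
      exact hφ hs
    have hDmeas : ∀ σ, MeasurableSet (D σ) := by
      intro σ
      have h1 : Measurable fun p : Fin 3 × ℝ =>
          (fun i : Fin 3 => if σ i = p.1 then -p.2 else p.2) := by
        refine measurable_pi_lambda _ fun i => ?_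
        refine Measurable.ite ?_ measurable_snd.neg measurable_snd
        exact measurable_fst (Set.to_countable {x : Fin 3 | σ i = x}).measurableSet
      exact MeasurableSet.inter (h1 hs)
        (MeasurableSet.inter (measurable_fst ht) (measurable_snd hC₀))
    have hFmeas : MeasurableSet (TX ⁻¹' s ∩ (Y ⁻¹' t ∩ Z ⁻¹' C₀)) :=
      (hTXmeas hs).inter ((hYmeas ht).inter (hZmeas hC₀))
    have hFiff : ∀ ω, ω ∈ TX ⁻¹' s ∩ (Y ⁻¹' t ∩ Z ⁻¹' C₀) ↔ (Y ω, Z ω) ∈ D (π ω) := by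
      intro ω
      have hTXω : TX ω = fun i => if (π ω) i = Y ω then -(Z ω) else Z ω := by
        funext i; rw [hTX, hX]
      simp only [Set.mem_inter_iff, Set.mem_preimage, hDdef, Set.mem_setOf_eq, hTXω]
    rw [keyA D hDmeas _ hFmeas hFiff]
    -- decompose each term over the values of Y
    set e : Fin 3 → Fin 3 → Set Ω := fun y j =>
      (Y ⁻¹' t ∩ Z ⁻¹' ({z : ℝ | (fun i => if i = j then -z else z) ∈ s} ∩ C₀)) ∩ Y ⁻¹' {y}
      with hedef
    have hterm : ∀ σ : Equiv.Perm (Fin 3),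
        μ {ω | (Y ω, Z ω) ∈ D σ} = ∑ y : Fin 3, μ (e y (σ⁻¹ y)) := by
      intro σ
      have hmD : MeasurableSet {ω | (Y ω, Z ω) ∈ D σ} := hYZ (hDmeas σ)
      rw [decompY _ hmD]
      refine Finset.sum_congr rfl fun y _ => ?_
      congr 1
      ext ω
      simp only [hDdef, hedef, Set.mem_inter_iff, Set.mem_setOf_eq, Set.mem_preimage,
        Set.mem_singleton_iff]
      constructor
      · rintro ⟨⟨h1, h2, h3⟩, hy⟩
        rw [hy] at h1
        rw [hfe y σ (Z ω)] at h1
        exact ⟨⟨h2, h1, h3⟩, hy⟩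
      · rintro ⟨⟨h2, h1, h3⟩, hy⟩
        rw [← hfe y σ (Z ω)] at h1
        rw [← hy] at h1
        exact ⟨⟨h1, h2, h3⟩, hy⟩
    calc (6 : ENNReal)⁻¹ * ∑ σ : Equiv.Perm (Fin 3), μ {ω | (Y ω, Z ω) ∈ D σ}
        = (6 : ENNReal)⁻¹ * ∑ y : Fin 3, ∑ σ : Equiv.Perm (Fin 3), μ (e y (σ⁻¹ y)) := by
          rw [Finset.sum_congr rfl fun σ _ => hterm σ, Finset.sum_comm]
      _ = (6 : ENNReal)⁻¹ * ∑ y : Fin 3, 2 * ∑ j : Fin 3, μ (e y j) := by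
          rw [Finset.sum_congr rfl fun y _ => sum_perm3 (fun j => μ (e y j)) y]
      _ = 3⁻¹ * ∑ j : Fin 3, ∑ y : Fin 3, μ (e y j) := by
          rw [← Finset.mul_sum, ← mul_assoc, Finset.sum_comm]
          congr 1
          rw [show ((6 : ENNReal)⁻¹ * 2 = 3⁻¹) from ?_]
          rw [show ((6 : ENNReal) = 2 * 3) from by norm_num, ENNReal.mul_inv (by norm_num)
            (by norm_num), mul_comm (2 : ENNReal)⁻¹ _, mul_assoc,
            ENNReal.inv_mul_cancel (by norm_num) (by norm_num), mul_one]
      _ = 3⁻¹ * ∑ j : Fin 3,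
            μ (Y ⁻¹' t ∩ Z ⁻¹' ({z : ℝ | (fun i => if i = j then -z else z) ∈ s} ∩ C₀)) := by
          congr 1
          refine Finset.sum_congr rfl fun j _ => ?_
          rw [← decompY _ ((hYmeas ht).inter (hZmeas ((hBmeas j).inter hC₀)))]
  have hm'le : MeasurableSpace.comap Z inferInstance ≤ ‹MeasurableSpace Ω› := hZmeas.comap_le
  have hZm' : Measurable[MeasurableSpace.comap Z inferInstance] Z := fun u hu => ⟨u, hu, rfl⟩
  have hBmeas : ∀ (s : Set (Fin 3 → ℝ)), MeasurableSet s → ∀ j : Fin 3,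
      MeasurableSet {z : ℝ | (fun i => if i = j then -z else z) ∈ s} := by
    intro s hs j
    have hφ : Measurable fun z : ℝ => (fun i : Fin 3 => if i = j then -z else z) := by
      refine measurable_pi_lambda _ fun i => ?_
      by_cases h : i = j
      · simpa [h] using measurable_neg
      · simpa [h] using measurable_id'
    exact hφ hs
  have h01 : ∀ (U : Set ℝ) (z : ℝ), (0:ℝ) ≤ Set.indicator U (fun _ => (1:ℝ)) z ∧
      Set.indicator U (fun _ => (1:ℝ)) z ≤ 1 := by
    intro U z
    rw [Set.indicator_apply]
    split_ifs <;> norm_num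
  have main : ∀ (s : Set (Fin 3 → ℝ)), MeasurableSet s → ∀ t : Set (Fin 3),
      (fun ω => ((3:ℝ)⁻¹ * ∑ j : Fin 3, Set.indicator
          {z : ℝ | (fun i => if i = j then -z else z) ∈ s} (fun _ => (1:ℝ)) (Z ω))
        * (μ⟦Y ⁻¹' t | MeasurableSpace.comap Z inferInstance⟧) ω)
      =ᵐ[μ] μ⟦TX ⁻¹' s ∩ Y ⁻¹' t | MeasurableSpace.comap Z inferInstance⟧ := by
    intro s hs t
    have ht : MeasurableSet t := t.to_countable.measurableSet
    set B : Fin 3 → Set ℝ := fun j => {z : ℝ | (fun i => if i = j then -z else z) ∈ s}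
      with hBdef
    set gs : Ω → ℝ := fun ω =>
      (3:ℝ)⁻¹ * ∑ j : Fin 3, Set.indicator (B j) (fun _ => (1:ℝ)) (Z ω) with hgsdef
    have hgsm : StronglyMeasurable[MeasurableSpace.comap Z inferInstance] gs := by
      have hh : Measurable fun z : ℝ =>
          (3:ℝ)⁻¹ * ∑ j : Fin 3, Set.indicator (B j) (fun _ => (1:ℝ)) z :=
        measurable_const.mul
          (Finset.measurable_sum _ fun j _ => measurable_const.indicator (hBmeas s hs j))
      exact (hh.comp hZm').stronglyMeasurable
    have hgs_nonneg : ∀ ω, 0 ≤ gs ω := fun ω =>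
      mul_nonneg (by norm_num) (Finset.sum_nonneg fun j _ => (h01 _ _).1)
    have hgs_bdd : ∀ ω, ‖gs ω‖ ≤ 1 := by
      intro ω
      rw [Real.norm_eq_abs, abs_of_nonneg (hgs_nonneg ω)]
      have hsum_le : ∑ j : Fin 3, Set.indicator (B j) (fun _ => (1:ℝ)) (Z ω) ≤ 3 := by
        calc ∑ j : Fin 3, Set.indicator (B j) (fun _ => (1:ℝ)) (Z ω)
            ≤ ∑ _j : Fin 3, (1:ℝ) := Finset.sum_le_sum fun j _ => (h01 _ _).2
          _ = 3 := by simp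
      calc gs ω ≤ (3:ℝ)⁻¹ * 3 := mul_le_mul_of_nonneg_left hsum_le (by norm_num)
        _ = 1 := by norm_num
    have hind_t : Integrable ((Y ⁻¹' t).indicator (fun _ => (1:ℝ))) μ :=
      (integrable_const 1).indicator (hYmeas ht)
    have hgs_asm : AEStronglyMeasurable gs μ := (hgsm.mono hm'le).aestronglyMeasurable
    have hprod_int : Integrable (gs * (Y ⁻¹' t).indicator (fun _ => (1:ℝ))) μ :=
      hind_t.bdd_mul (c := 1) hgs_asm (Filter.Eventually.of_forall hgs_bdd)
    have hpull := condExp_mul_of_stronglyMeasurable_left (μ := μ) hgsm hprod_int hind_t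
    have hf_int : Integrable ((TX ⁻¹' s ∩ Y ⁻¹' t).indicator (fun _ => (1:ℝ))) μ :=
      (integrable_const 1).indicator ((hTXmeas hs).inter (hYmeas ht))
    have hg_int : Integrable (fun ω => gs ω *
        (μ⟦Y ⁻¹' t | MeasurableSpace.comap Z inferInstance⟧) ω) μ :=
      integrable_condExp.bdd_mul (c := 1) hgs_asm (Filter.Eventually.of_forall hgs_bdd)
    refine ae_eq_condExp_of_forall_setIntegral_eq hm'le hf_int
      (fun C _ _ => hg_int.integrableOn) ?_ ?_
    · rintro C ⟨C₀, hC₀, rfl⟩ -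
      have hCm : MeasurableSet (Z ⁻¹' C₀) := hZmeas hC₀
      have hCm' : MeasurableSet[MeasurableSpace.comap Z inferInstance] (Z ⁻¹' C₀) :=
        ⟨C₀, hC₀, rfl⟩
      have hptwise : ∀ x, (gs * (Y ⁻¹' t).indicator (fun _ => (1:ℝ))) x
          = (3:ℝ)⁻¹ * ∑ j : Fin 3,
              (Y ⁻¹' t ∩ Z ⁻¹' (B j)).indicator (fun _ => (1:ℝ)) x := by
        intro x
        simp only [Pi.mul_apply, hgsdef, mul_assoc, Finset.sum_mul]
        congr 1
        refine Finset.sum_congr rfl fun j _ => ?_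
        by_cases h1 : Z x ∈ B j <;> by_cases h2 : x ∈ Y ⁻¹' t <;>
          simp [Set.indicator_apply, h1, h2]
      calc ∫ x in Z ⁻¹' C₀, gs x *
              (μ⟦Y ⁻¹' t | MeasurableSpace.comap Z inferInstance⟧) x ∂μ
          = ∫ x in Z ⁻¹' C₀,
              (μ[gs * (Y ⁻¹' t).indicator (fun _ => (1:ℝ)) |
                MeasurableSpace.comap Z inferInstance]) x ∂μ :=
            (setIntegral_congr_ae hCm (hpull.mono fun x hx _ => hx.symm))
        _ = ∫ x in Z ⁻¹' C₀, (gs * (Y ⁻¹' t).indicator (fun _ => (1:ℝ))) x ∂μ :=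
            setIntegral_condExp hm'le hprod_int hCm'
        _ = ∫ x in Z ⁻¹' C₀, (3:ℝ)⁻¹ * ∑ j : Fin 3,
              (Y ⁻¹' t ∩ Z ⁻¹' (B j)).indicator (fun _ => (1:ℝ)) x ∂μ := by
            exact setIntegral_congr_ae hCm (Filter.Eventually.of_forall fun x _ => hptwise x)
        _ = (3:ℝ)⁻¹ * ∑ j : Fin 3,
              (μ (Z ⁻¹' C₀ ∩ (Y ⁻¹' t ∩ Z ⁻¹' (B j)))).toReal := by
            rw [integral_const_mul, integral_finset_sum]
            · congr 1
              refine Finset.sum_congr rfl fun j _ => ?_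
              rw [setIntegral_indicator ((hYmeas ht).inter (hZmeas (hBmeas s hs j))),
                setIntegral_const]
              simp only [smul_eq_mul, mul_one]
              rfl
            · exact fun j _ =>
                (((integrable_const (1:ℝ)).indicator
                  ((hYmeas ht).inter (hZmeas (hBmeas s hs j)))).integrableOn)
        _ = (μ (TX ⁻¹' s ∩ (Y ⁻¹' t ∩ Z ⁻¹' C₀))).toReal := by
            rw [key s hs t C₀ hC₀, ENNReal.toReal_mul, ENNReal.toReal_sum
              (fun j _ => measure_ne_top μ _)]
            congr 1
            · simp [ENNReal.toReal_inv]
            · refine Finset.sum_congr rfl fun j _ => ?_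
              have hset : Z ⁻¹' C₀ ∩ (Y ⁻¹' t ∩ Z ⁻¹' (B j))
                  = Y ⁻¹' t ∩ Z ⁻¹' (B j ∩ C₀) := by
                ext x
                simp only [Set.mem_inter_iff, Set.mem_preimage]
                tauto
              rw [hset]
        _ = ∫ x in Z ⁻¹' C₀,
              (TX ⁻¹' s ∩ Y ⁻¹' t).indicator (fun _ => (1:ℝ)) x ∂μ := by
            rw [setIntegral_indicator ((hTXmeas hs).inter (hYmeas ht)), setIntegral_const]
            simp only [smul_eq_mul, mul_one]
            have hset : Z ⁻¹' C₀ ∩ (TX ⁻¹' s ∩ Y ⁻¹' t)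
                = TX ⁻¹' s ∩ (Y ⁻¹' t ∩ Z ⁻¹' C₀) := by
              ext x
              simp only [Set.mem_inter_iff, Set.mem_preimage]
              tauto
            rw [hset]
            rfl
    · exact (hgsm.mul stronglyMeasurable_condExp).aestronglyMeasurable
  -- assemble
  rw [condIndepFun_iff_condExp_inter_preimage_eq_mul hTXmeas hYmeas]
  intro s t hs ht'
  have h1 := main s hs t
  have h2 := main s hs Set.univ
  simp only [Set.preimage_univ, Set.inter_univ] at h2
  have hcu : μ[Set.indicator (Set.univ : Set Ω) (fun _ => (1:ℝ)) |
      MeasurableSpace.comap Z inferInstance] = fun _ => (1:ℝ) := by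
    rw [Set.indicator_univ]
    exact condExp_const hm'le _
  rw [hcu] at h2
  simp only [mul_one] at h2
  filter_upwards [h1, h2] with ω e1 e2
  rw [← e1, ← e2]
end

section
/- Let (Y, Z, X) be finite-valued random variables under a distribution p_tr with all relevant conditionals positive. Define p_⊥(y,x) = Σ_z [p_tr(y)/p_tr(y|z)]·p_tr(y,z,x) and, for a measurable transformation T with exogenous randomness δ ⟂ (Y,Z,X), define p_T(y,x) = E_δ [p_tr(y)/p_tr(y|T(x,δ))]·p_tr(y,x). If E_{p_⊥ × p(δ)}[p_tr(Y|T(X,δ))^{-2}] ≤ m² and E_{p_⊥ × p(δ)}[|p_tr(Y|T(X,δ)) − p_tr(Y|Z)|²] = ε², then the L¹ distance satisfies Σ_{y,x} |p_⊥(y,x) − p_T(y,x)| ≤ m·ε. -/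
open Finset

/-- Proposition 1: the `L¹` distance between the nuisance-randomized
distribution `p_⊥` and the corruption-reweighted distribution `p_T` is bounded by `m·ε`,
the product of the second-moment bounds for the inverse biased model and for the `L²`
distance between the two biased models. All spaces are finite and conditionals positive. -/
theorem l1_bound_nuisance_randomized_vs_corruption
    {𝒴 𝒵 𝒳 Δ 𝒯 : Type*}
    [Fintype 𝒴] [Fintype 𝒵] [Fintype 𝒳] [Fintype Δ] [Fintype 𝒯] [DecidableEq 𝒯]
    -- the training distribution over (Y, Z, X):
    (p : 𝒴 → 𝒵 → 𝒳 → ℝ)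
    (hp0 : ∀ y z x, 0 ≤ p y z x)
    (hp1 : ∑ y, ∑ z, ∑ x, p y z x = 1)
    -- the exogenous-noise distribution:
    (pδ : Δ → ℝ) (hpδ0 : ∀ d, 0 ≤ pδ d) (hpδ1 : ∑ d, pδ d = 1)
    -- the corruption:
    (Tf : 𝒳 → Δ → 𝒯)
    -- the label marginal p_tr(y):
    (pY : 𝒴 → ℝ) (hpY : ∀ y, pY y = ∑ z, ∑ x, p y z x)
    -- the conditional p_tr(y | z), assumed strictly positive:
    (cYZ : 𝒴 → 𝒵 → ℝ) (hcYZpos : ∀ y z, 0 < cYZ y z)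
    (hcYZ : ∀ y z, cYZ y z * (∑ y', ∑ x, p y' z x) = ∑ x, p y z x)
    -- the conditional p_tr(y | T(x,δ)) under p_tr × p(δ), assumed strictly positive:
    (cYT : 𝒴 → 𝒯 → ℝ) (hcYTpos : ∀ y t, 0 < cYT y t)
    (hcYT : ∀ y t,
      cYT y t * (∑ y', ∑ z, ∑ x, ∑ d, (if Tf x d = t then p y' z x * pδ d else 0))
        = ∑ z, ∑ x, ∑ d, (if Tf x d = t then p y z x * pδ d else 0))
    -- the nuisance-randomized distribution p_⊥(y, x):
    (pPerp : 𝒴 → 𝒳 → ℝ)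
    (hpPerp : ∀ y x, pPerp y x = ∑ z, (pY y / cYZ y z) * p y z x)
    -- the corruption-reweighted distribution p_T(y, x):
    (pT : 𝒴 → 𝒳 → ℝ)
    (hpT : ∀ y x, pT y x = ∑ d, pδ d * (pY y / cYT y (Tf x d)) * (∑ z, p y z x))
    (m ε : ℝ) (hm : 0 ≤ m) (hε : 0 ≤ ε)
    -- E_{p_⊥ × p(δ)}[ p_tr(Y | T(X,δ))⁻² ] ≤ m²:
    (h1 : ∑ y, ∑ z, ∑ x, ∑ d,
        ((pY y / cYZ y z) * p y z x) * pδ d * (1 / cYT y (Tf x d)) ^ 2 ≤ m ^ 2)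
    -- E_{p_⊥ × p(δ)}[ |p_tr(Y | T(X,δ)) − p_tr(Y | Z)|² ] = ε²:
    (h2 : ∑ y, ∑ z, ∑ x, ∑ d,
        ((pY y / cYZ y z) * p y z x) * pδ d * |cYT y (Tf x d) - cYZ y z| ^ 2 = ε ^ 2) :
    ∑ y, ∑ x, |pPerp y x - pT y x| ≤ m * ε := by
  classical
  -- weight function
  set w : 𝒴 → 𝒵 → 𝒳 → Δ → ℝ :=
    fun y z x d => ((pY y / cYZ y z) * p y z x) * pδ d with hw
  have hpYnn : ∀ y, 0 ≤ pY y := by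
    intro y; rw [hpY]
    exact Finset.sum_nonneg fun z _ => Finset.sum_nonneg fun x _ => hp0 y z x
  have hwnn : ∀ y z x d, 0 ≤ w y z x d := by
    intro y z x d
    exact mul_nonneg (mul_nonneg (div_nonneg (hpYnn y) (hcYZpos y z).le) (hp0 y z x)) (hpδ0 d)
  -- pointwise bound on |pPerp - pT|
  have key : ∀ y x, |pPerp y x - pT y x| ≤
      ∑ z, ∑ d, w y z x d * ((1 / cYT y (Tf x d)) * |cYT y (Tf x d) - cYZ y z|) := by
    intro y x
    have e1 : pPerp y x = ∑ z, ∑ d, pδ d * ((pY y / cYZ y z) * p y z x) := by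
      rw [hpPerp]
      refine Finset.sum_congr rfl fun z _ => ?_
      rw [← Finset.sum_mul, hpδ1, one_mul]
    have e2 : pT y x = ∑ z, ∑ d, pδ d * (pY y / cYT y (Tf x d)) * p y z x := by
      rw [hpT]
      rw [show (∑ d, pδ d * (pY y / cYT y (Tf x d)) * (∑ z, p y z x))
          = ∑ d, ∑ z, pδ d * (pY y / cYT y (Tf x d)) * p y z x from
        Finset.sum_congr rfl fun d _ => Finset.mul_sum _ _ _]
      exact Finset.sum_comm
    rw [e1, e2, ← Finset.sum_sub_distrib]
    refine (Finset.abs_sum_le_sum_abs _ _).trans ?_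
    refine Finset.sum_le_sum fun z _ => ?_
    rw [← Finset.sum_sub_distrib]
    refine (Finset.abs_sum_le_sum_abs _ _).trans ?_
    refine Finset.sum_le_sum fun d _ => ?_
    have hz := (hcYZpos y z).ne'
    have ht := (hcYTpos y (Tf x d)).ne'
    have heq : pδ d * ((pY y / cYZ y z) * p y z x) - pδ d * (pY y / cYT y (Tf x d)) * p y z x
        = w y z x d * ((1 / cYT y (Tf x d)) * (cYT y (Tf x d) - cYZ y z)) := by
      rw [hw]; field_simp
    rw [heq]
    have habs : |w y z x d * (1 / cYT y (Tf x d) * (cYT y (Tf x d) - cYZ y z))|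
        = w y z x d * (1 / cYT y (Tf x d) * |cYT y (Tf x d) - cYZ y z|) := by
      rw [abs_mul (w y z x d), abs_of_nonneg (hwnn y z x d),
        abs_mul (1 / cYT y (Tf x d)), abs_of_pos (one_div_pos.mpr (hcYTpos y (Tf x d)))]
    exact habs.le
  -- sum the pointwise bound
  have step1 : ∑ y, ∑ x, |pPerp y x - pT y x| ≤
      ∑ y, ∑ z, ∑ x, ∑ d, w y z x d * ((1 / cYT y (Tf x d)) * |cYT y (Tf x d) - cYZ y z|) := by
    refine Finset.sum_le_sum fun y _ => ?_
    rw [Finset.sum_comm]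
    exact Finset.sum_le_sum fun x _ => key y x
  refine step1.trans ?_
  -- flatten to a single sum over the product type
  set ι := 𝒴 × 𝒵 × 𝒳 × Δ
  set W : ι → ℝ := fun i => w i.1 i.2.1 i.2.2.1 i.2.2.2 with hW
  set A : ι → ℝ := fun i => 1 / cYT i.1 (Tf i.2.2.1 i.2.2.2) with hA
  set B : ι → ℝ := fun i => |cYT i.1 (Tf i.2.2.1 i.2.2.2) - cYZ i.1 i.2.1| with hB
  have hWnn : ∀ i : ι, 0 ≤ W i := fun i => hwnn _ _ _ _
  have flat : ∑ y, ∑ z, ∑ x, ∑ d, w y z x d * ((1 / cYT y (Tf x d)) * |cYT y (Tf x d) - cYZ y z|)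
      = ∑ i : ι, W i * (A i * B i) := by
    rw [Fintype.sum_prod_type]
    refine Finset.sum_congr rfl fun y _ => ?_
    rw [Fintype.sum_prod_type]
    refine Finset.sum_congr rfl fun z _ => ?_
    rw [Fintype.sum_prod_type]
  rw [flat]
  have hF1 : ∑ i : ι, W i * A i ^ 2 ≤ m ^ 2 := by
    calc ∑ i : ι, W i * A i ^ 2
        = ∑ y, ∑ z, ∑ x, ∑ d, ((pY y / cYZ y z) * p y z x) * pδ d * (1 / cYT y (Tf x d)) ^ 2 := by
          rw [Fintype.sum_prod_type]
          refine Finset.sum_congr rfl fun y _ => ?_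
          rw [Fintype.sum_prod_type]
          refine Finset.sum_congr rfl fun z _ => ?_
          rw [Fintype.sum_prod_type]
      _ ≤ m ^ 2 := h1
  have hF2 : ∑ i : ι, W i * B i ^ 2 = ε ^ 2 := by
    calc ∑ i : ι, W i * B i ^ 2
        = ∑ y, ∑ z, ∑ x, ∑ d, ((pY y / cYZ y z) * p y z x) * pδ d * |cYT y (Tf x d) - cYZ y z| ^ 2 := by
          rw [Fintype.sum_prod_type]
          refine Finset.sum_congr rfl fun y _ => ?_
          rw [Fintype.sum_prod_type]
          refine Finset.sum_congr rfl fun z _ => ?_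
          rw [Fintype.sum_prod_type]
      _ = ε ^ 2 := h2
  -- Cauchy–Schwarz with f = √W·A, g = √W·B
  have CS := Finset.sum_mul_sq_le_sq_mul_sq Finset.univ
      (fun i : ι => Real.sqrt (W i) * A i) (fun i : ι => Real.sqrt (W i) * B i)
  have hfg : ∀ i : ι, (Real.sqrt (W i) * A i) * (Real.sqrt (W i) * B i) = W i * (A i * B i) := by
    intro i
    have : Real.sqrt (W i) * Real.sqrt (W i) = W i := Real.mul_self_sqrt (hWnn i)
    calc (Real.sqrt (W i) * A i) * (Real.sqrt (W i) * B i)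
        = (Real.sqrt (W i) * Real.sqrt (W i)) * (A i * B i) := by ring
      _ = W i * (A i * B i) := by rw [this]
  have hf2 : ∀ i : ι, (Real.sqrt (W i) * A i) ^ 2 = W i * A i ^ 2 := by
    intro i; rw [mul_pow, Real.sq_sqrt (hWnn i)]
  have hg2 : ∀ i : ι, (Real.sqrt (W i) * B i) ^ 2 = W i * B i ^ 2 := by
    intro i; rw [mul_pow, Real.sq_sqrt (hWnn i)]
  rw [Finset.sum_congr rfl (fun i _ => hfg i), Finset.sum_congr rfl (fun i _ => hf2 i),
    Finset.sum_congr rfl (fun i _ => hg2 i), hF2] at CS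
  have hSnn : 0 ≤ ∑ i : ι, W i * (A i * B i) := by
    refine Finset.sum_nonneg fun i _ => mul_nonneg (hWnn i) (mul_nonneg ?_ (abs_nonneg _))
    exact (one_div_pos.mpr (hcYTpos _ _)).le
  have hsq : (∑ i : ι, W i * (A i * B i)) ^ 2 ≤ (m * ε) ^ 2 := by
    calc (∑ i : ι, W i * (A i * B i)) ^ 2 ≤ (∑ i : ι, W i * A i ^ 2) * ε ^ 2 := CS
      _ ≤ m ^ 2 * ε ^ 2 := by
          refine mul_le_mul_of_nonneg_right hF1 (by positivity)
      _ = (m * ε) ^ 2 := by ring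
  have hfin := Real.sqrt_le_sqrt hsq
  rwa [Real.sqrt_sq hSnn, Real.sqrt_sq (mul_nonneg hm hε)] at hfin
end

section
/- There is no function f: {-1,1}² → {-1,1} such that P(f(X)=Y) > 1/2 simultaneously under all four distributions p_{1,0}, p_{1,1}, p_{2,0}, p_{2,1}, where p_{1,ρ} places (X*, Z) and p_{2,ρ} places (Z, X*) as the coordinates of X, with Y uniform on {-1,1}, X* ~ R_{0.9}(Y), Z ~ R_ρ(Y) conditionally independent given Y. -/
/-- `signFlip α a b` = probability that `R_α(a) = b`: the sign of `a` is kept with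
probability `α` and flipped with probability `1 - α` (for `a, b ∈ {-1, 1}`). -/
noncomputable def signFlip (α : ℝ) (a b : ℤ) : ℝ := if b = a then α else 1 - α

/-- Family member `p_{1,ρ}`: `Y` uniform on `{-1,1}`, `X = (X*, Z)` with
`X* ~ R_{0.9}(Y)` and `Z ~ R_ρ(Y)` conditionally independent given `Y`. -/
noncomputable def p1fam (ρ : ℝ) (y x1 x2 : ℤ) : ℝ :=
  (1 / 2) * signFlip (9 / 10) y x1 * signFlip ρ y x2

/-- Family member `p_{2,ρ}`: same but with coordinates swapped, `X = (Z, X*)`. -/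
noncomputable def p2fam (ρ : ℝ) (y x1 x2 : ℤ) : ℝ :=
  (1 / 2) * signFlip ρ y x1 * signFlip (9 / 10) y x2

/-- The support `{-1, 1}` of all the sign-valued variables. -/
def signs : Finset ℤ := {-1, 1}

/-- Accuracy `P(f(X₁, X₂) = Y)` of a predictor `f` under the distribution `p`. -/
noncomputable def acc (p : ℤ → ℤ → ℤ → ℝ) (f : ℤ → ℤ → ℤ) : ℝ :=
  ∑ y ∈ signs, ∑ x1 ∈ signs, ∑ x2 ∈ signs, p y x1 x2 * (if f x1 x2 = y then 1 else 0)

/-- no single predictor beats random chance simultaneously under all four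
distributions `p_{1,0}`, `p_{1,1}`, `p_{2,0}`, `p_{2,1}`. -/
theorem no_predictor_beats_chance_on_both_families :
    ¬ ∃ f : ℤ → ℤ → ℤ,
      (∀ x1 ∈ signs, ∀ x2 ∈ signs, f x1 x2 ∈ signs) ∧
      acc (p1fam 0) f > 1 / 2 ∧ acc (p1fam 1) f > 1 / 2 ∧
      acc (p2fam 0) f > 1 / 2 ∧ acc (p2fam 1) f > 1 / 2 := by
  rintro ⟨f, hf, h1, h2, h3, h4⟩
  have ha := hf (-1) (by decide) (-1) (by decide)
  have hb := hf (-1) (by decide) 1 (by decide)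
  have hc := hf 1 (by decide) (-1) (by decide)
  have hd := hf 1 (by decide) 1 (by decide)
  simp only [signs, Finset.mem_insert, Finset.mem_singleton] at ha hb hc hd
  simp only [acc, p1fam, p2fam, signFlip, signs, Finset.sum_insert, Finset.mem_singleton,
    Finset.sum_singleton] at h1 h2 h3 h4
  rcases ha with ha | ha <;> rcases hb with hb | hb <;> rcases hc with hc | hc <;>
    rcases hd with hd | hd <;>
    norm_num [ha, hb, hc, hd] at *
end
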